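/- Let C be a cyclic code of length n = p^k over R = F[u]/⟨u⁴⟩ with i-th torsional degrees t_i (0 ≤ i ≤ 3). Then there exist integers k_1, …, k_6 ≥ 0 and elements p_1(x), …, p_6(x) of S, each of which is either zero or a unit of F[x]/⟨xⁿ − 1⟩ lifted to S, such that C is generated as an ideal of S by the four polynomials g_0(x) = (x−1)^{t_0} + u(x−1)^{k_1}p_1(x) + u²(x−1)^{k_2}p_2(x) + u³(x−1)^{k_3}p_3(x), g_1(x) = u(x−1)^{t_1} + u²(x−1)^{k_4}p_4(x) + u³(x−1)^{k_5}p_5(x), g_2(x) = u²(x−1)^{t_2} + u³(x−1)^{k_6}p_6(x), and g_3(x) = u³(x−1)^{t_3}, where whenever p_1 ≠ 0 one has k_1 < t_1, whenever p_2 ≠ 0 or p_4 ≠ 0 one has k_2 < t_2 resp. k_4 < t_2, and whenever p_3 ≠ 0, p_5 ≠ 0 or p_6 ≠ 0 one has k_3 < t_3, k_5 < t_3 resp. k_6 < t_3. -/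

import Mathlib

open Polynomial
open scoped Classical

noncomputable section

/-- The ring `R = F[u]/⟨u⁴⟩`. -/
abbrev Rq (F : Type) [Field F] : Type :=
  Polynomial F ⧸ Ideal.span ({X ^ 4} : Set (Polynomial F))

instance instCommRingRq (F : Type) [Field F] : CommRing (Rq F) :=
  Ideal.Quotient.commRing _

/-- The ring `S = R[x]/⟨xⁿ − 1⟩`. -/
abbrev Sq (F : Type) [Field F] (n : ℕ) : Type :=
  Polynomial (Rq F) ⧸ Ideal.span ({X ^ n - 1} : Set (Polynomial (Rq F)))

/-- The ring `Q = F[x]/⟨xⁿ − 1⟩`. -/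
abbrev Qq (F : Type) [Field F] (n : ℕ) : Type :=
  Polynomial F ⧸ Ideal.span ({X ^ n - 1} : Set (Polynomial F))

/-- The element `u` of `R`. -/
def uu (F : Type) [Field F] : Rq F := Ideal.Quotient.mk _ X

/-- The element `u` of `S`. -/
def uS (F : Type) [Field F] (n : ℕ) : Sq F n := Ideal.Quotient.mk _ (C (uu F))

/-- The element `x` of `S`. -/
def xS (F : Type) [Field F] (n : ℕ) : Sq F n := Ideal.Quotient.mk _ X

/-- The element `x` of `Q`. -/
def xQ (F : Type) [Field F] (n : ℕ) : Qq F n := Ideal.Quotient.mk _ X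

/-- Reduction `R → F` modulo `u`. -/
def resHom (F : Type) [Field F] : Rq F →+* F :=
  Ideal.Quotient.lift _ (evalRingHom 0) (by
    intro a ha
    rw [Ideal.mem_span_singleton] at ha
    obtain ⟨c, rfl⟩ := ha
    simp)

/-- Reduction `μ : S → Q` modulo `u`. -/
def muHom (F : Type) [Field F] (n : ℕ) : Sq F n →+* Qq F n :=
  Ideal.Quotient.lift _ ((Ideal.Quotient.mk _).comp (mapRingHom (resHom F))) (by
    intro a ha
    rw [Ideal.mem_span_singleton] at ha
    obtain ⟨c, rfl⟩ := ha
    rw [RingHom.comp_apply, map_mul, Ideal.Quotient.eq_zero_iff_mem]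
    apply Ideal.mul_mem_right
    have h : (mapRingHom (resHom F)) (X ^ n - 1 : Polynomial (Rq F))
        = (X ^ n - 1 : Polynomial F) := by simp
    rw [h]
    exact Ideal.subset_span rfl)

/-- The natural lift `Q → S` (sending `a ∈ F` to itself and `x ↦ x`). -/
def liftQS (F : Type) [Field F] (n : ℕ) : Qq F n →+* Sq F n :=
  Ideal.Quotient.lift _
    ((Ideal.Quotient.mk _).comp
      (mapRingHom ((Ideal.Quotient.mk _).comp (C : F →+* Polynomial F)))) (by
    intro a ha
    rw [Ideal.mem_span_singleton] at ha
    obtain ⟨c, rfl⟩ := ha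
    rw [RingHom.comp_apply, map_mul, Ideal.Quotient.eq_zero_iff_mem]
    apply Ideal.mul_mem_right
    have h : (mapRingHom ((Ideal.Quotient.mk (Ideal.span ({X ^ 4} : Set (Polynomial F)))).comp
        (C : F →+* Polynomial F))) (X ^ n - 1 : Polynomial F)
        = (X ^ n - 1 : Polynomial (Rq F)) := by simp
    rw [h]
    exact Ideal.subset_span rfl)

/-- The `i`-th torsion code `Tor_i(C) = {μ(g) : uⁱ·g ∈ C}`, as a subset of `Q`. -/
def TorSet (F : Type) [Field F] (n : ℕ) (i : ℕ) (Cc : Ideal (Sq F n)) : Set (Qq F n) :=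
  { a | ∃ g : Sq F n, (uS F n) ^ i * g ∈ Cc ∧ muHom F n g = a }

/-- The code `C` has `i`-th torsional degree `t`, i.e. `Tor_i(C) = ⟨(x−1)^t⟩` with `0 ≤ t ≤ n`. -/
def HasTorDeg (F : Type) [Field F] (n : ℕ) (i : ℕ) (Cc : Ideal (Sq F n)) (t : ℕ) : Prop :=
  t ≤ n ∧ TorSet F n i Cc = ↑(Ideal.span {(xQ F n - 1) ^ t})

/-- An element of `S` that is the lift of a unit of `Q = F[x]/⟨xⁿ−1⟩`. -/
def IsUnitLift (F : Type) [Field F] (n : ℕ) (a : Sq F n) : Prop :=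
  ∃ q : Qq F n, IsUnit q ∧ a = liftQS F n q

/-- An element of `S` that is zero or the lift of a unit of `Q = F[x]/⟨xⁿ−1⟩`. -/
def UnitOrZeroLift (F : Type) [Field F] (n : ℕ) (a : Sq F n) : Prop :=
  a = 0 ∨ IsUnitLift F n a


/-!
Every `a ∈ S` is `μ(a)` lifted back to `S` plus a multiple of `u`, and since `xⁿ - 1 = (x - 1)ⁿ`
in characteristic `p`, `Q` is a chain ring: every nonzero element is `(x - 1)ʲ` times a unit.
The generators are built from the top down: `g₃` comes straight from `Tor₃`, and `gᵢ` from a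
preimage of `(x - 1)^{tᵢ}` in `Tor_i`, whose `uʲ`-coefficient (`j > i`) is written as
`(x - 1)^k p` and, when `k ≥ tⱼ`, cancelled against a multiple of `gⱼ`. Conversely an element of
`uⁱ S ∩ C` differs from a multiple of `gᵢ` by an element of `uⁱ⁺¹ S ∩ C`, and `u⁴ = 0`.
-/
section Reduction

variable {F : Type} [Field F] {n : ℕ}

lemma resHom_mk (f : F[X]) : resHom F (Ideal.Quotient.mk _ f) = f.eval 0 := by
  simp [resHom]

lemma muHom_mk (f : (Rq F)[X]) :
    muHom F n (Ideal.Quotient.mk _ f) = Ideal.Quotient.mk _ (f.map (resHom F)) := by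
  simp [muHom]

lemma liftQS_mk (f : F[X]) :
    liftQS F n (Ideal.Quotient.mk _ f)
      = Ideal.Quotient.mk _ (f.map ((Ideal.Quotient.mk _).comp (C : F →+* F[X]))) := by
  simp [liftQS]

lemma muHom_liftQS (q : Qq F n) : muHom F n (liftQS F n q) = q := by
  obtain ⟨f, rfl⟩ := Ideal.Quotient.mk_surjective q
  have hid : (resHom F).comp ((Ideal.Quotient.mk _).comp C) = RingHom.id F := by
    ext a
    simp [resHom_mk]
  rw [liftQS_mk, muHom_mk, Polynomial.map_map, hid, Polynomial.map_id]

lemma liftQS_xQ_sub_one_pow (j : ℕ) : liftQS F n ((xQ F n - 1) ^ j) = (xS F n - 1) ^ j := by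
  rw [map_pow, map_sub, map_one, xQ, liftQS_mk, Polynomial.map_X, xS]

lemma uS_pow_mul_eq_zero {i : ℕ} (hi : 4 ≤ i) (w : Sq F n) : uS F n ^ i * w = 0 := by
  have huu : uu F ^ 4 = 0 := by
    rw [uu, ← map_pow, Ideal.Quotient.mk_singleton_self]
  have h4 : uS F n ^ 4 = 0 := by rw [uS, ← map_pow, ← C_pow, huu, C_0, map_zero]
  rw [← Nat.add_sub_cancel' hi, pow_add, h4]
  ring

lemma exists_eq_liftQS_muHom_add_uS_mul (a : Sq F n) :
    ∃ b, a = liftQS F n (muHom F n a) + uS F n * b := by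
  obtain ⟨f, rfl⟩ := Ideal.Quotient.mk_surjective a
  rw [muHom_mk, liftQS_mk, Polynomial.map_map]
  have hdvd : C (uu F) ∣ f - f.map (((Ideal.Quotient.mk _).comp C).comp (resHom F)) := by
    refine Polynomial.C_dvd_iff_dvd_coeff _ _ |>.2 fun i => ?_
    obtain ⟨g, hg⟩ := Ideal.Quotient.mk_surjective (f.coeff i)
    rw [Polynomial.coeff_sub, Polynomial.coeff_map, ← hg, RingHom.comp_apply, resHom_mk,
      RingHom.comp_apply, ← map_sub, uu]
    exact _root_.map_dvd _ (by simp [Polynomial.X_dvd_iff, Polynomial.coeff_zero_eq_eval_zero])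
  obtain ⟨d, hd⟩ := hdvd
  exact ⟨Ideal.Quotient.mk _ d, by rw [uS, ← map_mul, ← hd, ← map_add, add_sub_cancel]⟩

end Reduction

section ChainStructure

variable {F : Type} [Field F] {n : ℕ}

/-- A polynomial prime to `x - 1` is prime to `(x - 1)ⁿ = xⁿ - 1`, hence a unit in `Q`. -/
lemma Qq.eq_zero_or_exists_isUnit_eq_pow_mul (hch : ((X : F[X]) - 1) ^ n = X ^ n - 1)
    (q : Qq F n) :
    q = 0 ∨ ∃ (j : ℕ) (v : Qq F n), IsUnit v ∧ q = (xQ F n - 1) ^ j * v := by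
  obtain ⟨f, rfl⟩ := Ideal.Quotient.mk_surjective q
  rcases eq_or_ne f 0 with rfl | hf
  · exact Or.inl (map_zero _)
  obtain ⟨g, hfg, hg⟩ := f.exists_eq_pow_rootMultiplicity_mul_and_not_dvd hf 1
  rw [C_1] at hfg hg
  refine Or.inr ⟨_, Ideal.Quotient.mk _ g, ?_, by rw [hfg, map_mul, map_pow, map_sub, map_one]; rfl⟩
  have hirr : Irreducible ((X : F[X]) - 1) := by simpa using irreducible_X_sub_C (1 : F)
  obtain ⟨a, b, hab⟩ := (hirr.coprime_iff_not_dvd.2 hg).pow_left (m := n)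
  apply_fun Ideal.Quotient.mk (Ideal.span {(X : F[X]) ^ n - 1}) at hab
  rw [hch, map_add, map_mul, map_mul, Ideal.Quotient.mk_singleton_self, mul_zero, zero_add,
    map_one] at hab
  exact IsUnit.of_mul_eq_one_right _ hab

lemma exists_eq_pow_mul_add_uS_mul (hch : ((X : F[X]) - 1) ^ n = X ^ n - 1) (s : Sq F n) :
    ∃ (j : ℕ) (pp b : Sq F n), UnitOrZeroLift F n pp ∧ s = (xS F n - 1) ^ j * pp + uS F n * b := by
  obtain ⟨b, hb⟩ := exists_eq_liftQS_muHom_add_uS_mul s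
  rcases Qq.eq_zero_or_exists_isUnit_eq_pow_mul hch (muHom F n s) with h | ⟨j, v, hv, h⟩
  · exact ⟨0, 0, b, Or.inl rfl, by rw [hb, h, map_zero]; ring⟩
  · exact ⟨j, liftQS F n v, b, Or.inr ⟨v, hv, rfl⟩, by rw [hb, h, map_mul, liftQS_xQ_sub_one_pow]⟩

/-- Write `s = (x - 1)ʲ p + u b`; if `j ≥ t`, then `uⁱ (x - 1)ʲ p ≡ (x - 1)ʲ⁻ᵗ p G` modulo `uⁱ⁺¹`,
so subtracting that multiple of `G` removes the term. -/
lemma exists_add_pow_mul_mem (hch : ((X : F[X]) - 1) ^ n = X ^ n - 1) {C : Ideal (Sq F n)}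
    {i t : ℕ} {G r a s : Sq F n} (hG : G = uS F n ^ i * (xS F n - 1) ^ t + uS F n ^ (i + 1) * r)
    (hGC : G ∈ C) (has : a + uS F n ^ i * s ∈ C) :
    ∃ (k : ℕ) (pp w : Sq F n), UnitOrZeroLift F n pp ∧ (pp ≠ 0 → k < t) ∧
      a + uS F n ^ i * (xS F n - 1) ^ k * pp + uS F n ^ (i + 1) * w ∈ C := by
  obtain ⟨j, pp, b, hpp, hs⟩ := exists_eq_pow_mul_add_uS_mul hch s
  by_cases hj : j < t
  · exact ⟨j, pp, b, hpp, fun _ => hj, by convert has using 1; rw [hs]; ring⟩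
  obtain ⟨d, rfl⟩ := Nat.exists_eq_add_of_le (not_lt.1 hj)
  refine ⟨0, 0, b - (xS F n - 1) ^ d * pp * r, Or.inl rfl, fun h => absurd rfl h, ?_⟩
  convert C.sub_mem has (C.mul_mem_left ((xS F n - 1) ^ d * pp) hGC) using 1
  rw [hs, hG]
  ring

end ChainStructure

namespace HasTorDeg

variable {F : Type} [Field F] {n i t : ℕ} {C : Ideal (Sq F n)}

lemma exists_pow_mul_add_mem (h : HasTorDeg F n i C t) :
    ∃ b, uS F n ^ i * (xS F n - 1) ^ t + uS F n ^ (i + 1) * b ∈ C := by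
  obtain ⟨g, hgC, hg⟩ : (xQ F n - 1) ^ t ∈ TorSet F n i C := by
    rw [h.2]
    exact Ideal.subset_span rfl
  obtain ⟨b, hb⟩ := exists_eq_liftQS_muHom_add_uS_mul g
  rw [hg, liftQS_xQ_sub_one_pow] at hb
  exact ⟨b, by convert hgC using 1; rw [hb]; ring⟩

lemma exists_eq_mul_add (h : HasTorDeg F n i C t) {G r c : Sq F n}
    (hG : G = uS F n ^ i * (xS F n - 1) ^ t + uS F n ^ (i + 1) * r)
    (hc : uS F n ^ i * c ∈ C) : ∃ a c', uS F n ^ i * c = a * G + uS F n ^ (i + 1) * c' := by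
  have hμc : muHom F n c ∈ TorSet F n i C := ⟨c, hc, rfl⟩
  rw [h.2, SetLike.mem_coe, Ideal.mem_span_singleton'] at hμc
  obtain ⟨q, hq⟩ := hμc
  obtain ⟨b, hb⟩ := exists_eq_liftQS_muHom_add_uS_mul c
  rw [← hq, map_mul, liftQS_xQ_sub_one_pow] at hb
  exact ⟨liftQS F n q, b - liftQS F n q * r, by rw [hb, hG]; ring⟩

lemma pow_mul_mem_of_succ (h : HasTorDeg F n i C t) {J : Ideal (Sq F n)} {G r : Sq F n}
    (hG : G = uS F n ^ i * (xS F n - 1) ^ t + uS F n ^ (i + 1) * r) (hGC : G ∈ C) (hGJ : G ∈ J)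
    (hJ : ∀ c, uS F n ^ (i + 1) * c ∈ C → uS F n ^ (i + 1) * c ∈ J)
    (c : Sq F n) (hc : uS F n ^ i * c ∈ C) : uS F n ^ i * c ∈ J := by
  obtain ⟨a, c', hc'⟩ := h.exists_eq_mul_add hG hc
  have hc'C : uS F n ^ (i + 1) * c' ∈ C := by
    rw [eq_sub_of_add_eq' hc'.symm]
    exact C.sub_mem hc (C.mul_mem_left a hGC)
  rw [hc']
  exact J.add_mem (J.mul_mem_left a hGJ) (hJ c' hc'C)

end HasTorDeg

section Generators

variable {F : Type} [Field F] {n : ℕ} {C : Ideal (Sq F n)} {t₀ t₁ t₂ t₃ : ℕ}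

theorem eq_span_of_hasTorDeg (h0 : HasTorDeg F n 0 C t₀) (h1 : HasTorDeg F n 1 C t₁)
    (h2 : HasTorDeg F n 2 C t₂) (h3 : HasTorDeg F n 3 C t₃) {G₀ G₁ G₂ G₃ r₀ r₁ r₂ : Sq F n}
    (hG₀ : G₀ = (xS F n - 1) ^ t₀ + uS F n * r₀)
    (hG₁ : G₁ = uS F n * (xS F n - 1) ^ t₁ + uS F n ^ 2 * r₁)
    (hG₂ : G₂ = uS F n ^ 2 * (xS F n - 1) ^ t₂ + uS F n ^ 3 * r₂)
    (hG₃ : G₃ = uS F n ^ 3 * (xS F n - 1) ^ t₃)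
    (hG₀C : G₀ ∈ C) (hG₁C : G₁ ∈ C) (hG₂C : G₂ ∈ C) (hG₃C : G₃ ∈ C) :
    C = Ideal.span {G₀, G₁, G₂, G₃} := by
  set J := Ideal.span {G₀, G₁, G₂, G₃}
  refine le_antisymm (fun c hc => ?_) (Ideal.span_le.2 ?_)
  · have h4 : ∀ c, uS F n ^ 4 * c ∈ C → uS F n ^ 4 * c ∈ J := fun c _ => by
      rw [uS_pow_mul_eq_zero le_rfl]
      exact J.zero_mem
    have h3' := h3.pow_mul_mem_of_succ (r := 0) (by rw [hG₃]; ring) hG₃C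
      (Ideal.subset_span (by simp)) h4
    have h2' := h2.pow_mul_mem_of_succ hG₂ hG₂C (Ideal.subset_span (by simp)) h3'
    have h1' := h1.pow_mul_mem_of_succ (r := r₁) (by rw [hG₁]; ring) hG₁C
      (Ideal.subset_span (by simp)) h2'
    have h0' := h0.pow_mul_mem_of_succ (r := r₀) (by rw [hG₀]; ring) hG₀C
      (Ideal.subset_span (by simp)) h1'
    simpa using h0' c (by simpa using hc)
  · simp [Set.insert_subset_iff, hG₀C, hG₁C, hG₂C, hG₃C]

lemma HasTorDeg.generator_three_mem (h3 : HasTorDeg F n 3 C t₃) :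
    uS F n ^ 3 * (xS F n - 1) ^ t₃ ∈ C := by
  obtain ⟨b, hb⟩ := h3.exists_pow_mul_add_mem
  rwa [uS_pow_mul_eq_zero le_rfl, add_zero] at hb

variable (hch : ((X : F[X]) - 1) ^ n = X ^ n - 1)
include hch

lemma HasTorDeg.exists_generator_two_mem (h2 : HasTorDeg F n 2 C t₂)
    (hG₃ : uS F n ^ 3 * (xS F n - 1) ^ t₃ ∈ C) :
    ∃ (k₆ : ℕ) (p₆ : Sq F n), UnitOrZeroLift F n p₆ ∧ (p₆ ≠ 0 → k₆ < t₃) ∧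
      uS F n ^ 2 * (xS F n - 1) ^ t₂ + uS F n ^ 3 * (xS F n - 1) ^ k₆ * p₆ ∈ C := by
  obtain ⟨b, hb⟩ := h2.exists_pow_mul_add_mem
  obtain ⟨k₆, p₆, w, hp₆, hk₆, hG₂⟩ :=
    exists_add_pow_mul_mem hch (t := t₃) (r := 0) (by ring) hG₃ hb
  rw [uS_pow_mul_eq_zero le_rfl, add_zero] at hG₂
  exact ⟨k₆, p₆, hp₆, hk₆, hG₂⟩

lemma HasTorDeg.exists_generator_one_mem (h1 : HasTorDeg F n 1 C t₁) {k₆ : ℕ} {p₆ : Sq F n}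
    (hG₂ : uS F n ^ 2 * (xS F n - 1) ^ t₂ + uS F n ^ 3 * (xS F n - 1) ^ k₆ * p₆ ∈ C)
    (hG₃ : uS F n ^ 3 * (xS F n - 1) ^ t₃ ∈ C) :
    ∃ (k₄ k₅ : ℕ) (p₄ p₅ : Sq F n), UnitOrZeroLift F n p₄ ∧ UnitOrZeroLift F n p₅ ∧
      (p₄ ≠ 0 → k₄ < t₂) ∧ (p₅ ≠ 0 → k₅ < t₃) ∧
      uS F n * (xS F n - 1) ^ t₁ + uS F n ^ 2 * (xS F n - 1) ^ k₄ * p₄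
        + uS F n ^ 3 * (xS F n - 1) ^ k₅ * p₅ ∈ C := by
  obtain ⟨b, hb⟩ := h1.exists_pow_mul_add_mem
  obtain ⟨k₄, p₄, w₄, hp₄, hk₄, hb⟩ :=
    exists_add_pow_mul_mem hch (t := t₂) (r := (xS F n - 1) ^ k₆ * p₆) (by ring) hG₂ hb
  obtain ⟨k₅, p₅, w₅, hp₅, hk₅, hG₁⟩ :=
    exists_add_pow_mul_mem hch (t := t₃) (r := 0) (by ring) hG₃ hb
  rw [uS_pow_mul_eq_zero le_rfl, add_zero] at hG₁
  exact ⟨k₄, k₅, p₄, p₅, hp₄, hp₅, hk₄, hk₅, by convert hG₁ using 1; ring⟩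

lemma HasTorDeg.exists_generator_zero_mem (h0 : HasTorDeg F n 0 C t₀)
    {k₄ k₅ k₆ : ℕ} {p₄ p₅ p₆ : Sq F n}
    (hG₁ : uS F n * (xS F n - 1) ^ t₁ + uS F n ^ 2 * (xS F n - 1) ^ k₄ * p₄
        + uS F n ^ 3 * (xS F n - 1) ^ k₅ * p₅ ∈ C)
    (hG₂ : uS F n ^ 2 * (xS F n - 1) ^ t₂ + uS F n ^ 3 * (xS F n - 1) ^ k₆ * p₆ ∈ C)
    (hG₃ : uS F n ^ 3 * (xS F n - 1) ^ t₃ ∈ C) :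
    ∃ (k₁ k₂ k₃ : ℕ) (p₁ p₂ p₃ : Sq F n), UnitOrZeroLift F n p₁ ∧ UnitOrZeroLift F n p₂ ∧
      UnitOrZeroLift F n p₃ ∧ (p₁ ≠ 0 → k₁ < t₁) ∧ (p₂ ≠ 0 → k₂ < t₂) ∧ (p₃ ≠ 0 → k₃ < t₃) ∧
      (xS F n - 1) ^ t₀ + uS F n * (xS F n - 1) ^ k₁ * p₁ + uS F n ^ 2 * (xS F n - 1) ^ k₂ * p₂
        + uS F n ^ 3 * (xS F n - 1) ^ k₃ * p₃ ∈ C := by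
  obtain ⟨b, hb⟩ := h0.exists_pow_mul_add_mem
  obtain ⟨k₁, p₁, w₁, hp₁, hk₁, hb⟩ := exists_add_pow_mul_mem hch (t := t₁)
    (r := (xS F n - 1) ^ k₄ * p₄ + uS F n * (xS F n - 1) ^ k₅ * p₅) (by ring) hG₁ hb
  obtain ⟨k₂, p₂, w₂, hp₂, hk₂, hb⟩ :=
    exists_add_pow_mul_mem hch (t := t₂) (r := (xS F n - 1) ^ k₆ * p₆) (by ring) hG₂ hb
  obtain ⟨k₃, p₃, w₃, hp₃, hk₃, hG₀⟩ :=
    exists_add_pow_mul_mem hch (t := t₃) (r := 0) (by ring) hG₃ hb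
  rw [uS_pow_mul_eq_zero le_rfl, add_zero] at hG₀
  exact ⟨k₁, k₂, k₃, p₁, p₂, p₃, hp₁, hp₂, hp₃, hk₁, hk₂, hk₃, by convert hG₀ using 1; ring⟩

end Generators

theorem stmt_2_general (p m k : ℕ) (hp : Nat.Prime p)
    (F : Type) [Field F] [Fintype F] (hF : Fintype.card F = p ^ m)
    (C : Ideal (Sq F (p ^ k))) (t₀ t₁ t₂ t₃ : ℕ)
    (h0 : HasTorDeg F (p ^ k) 0 C t₀) (h1 : HasTorDeg F (p ^ k) 1 C t₁)
    (h2 : HasTorDeg F (p ^ k) 2 C t₂) (h3 : HasTorDeg F (p ^ k) 3 C t₃) :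
    ∃ (k₁ k₂ k₃ k₄ k₅ k₆ : ℕ) (p₁ p₂ p₃ p₄ p₅ p₆ : Sq F (p ^ k)),
      UnitOrZeroLift F (p ^ k) p₁ ∧ UnitOrZeroLift F (p ^ k) p₂ ∧
      UnitOrZeroLift F (p ^ k) p₃ ∧ UnitOrZeroLift F (p ^ k) p₄ ∧
      UnitOrZeroLift F (p ^ k) p₅ ∧ UnitOrZeroLift F (p ^ k) p₆ ∧
      (p₁ ≠ 0 → k₁ < t₁) ∧
      (p₂ ≠ 0 → k₂ < t₂) ∧ (p₄ ≠ 0 → k₄ < t₂) ∧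
      (p₃ ≠ 0 → k₃ < t₃) ∧ (p₅ ≠ 0 → k₅ < t₃) ∧ (p₆ ≠ 0 → k₆ < t₃) ∧
      C = Ideal.span
        { (xS F (p ^ k) - 1) ^ t₀ + uS F (p ^ k) * (xS F (p ^ k) - 1) ^ k₁ * p₁
            + uS F (p ^ k) ^ 2 * (xS F (p ^ k) - 1) ^ k₂ * p₂
            + uS F (p ^ k) ^ 3 * (xS F (p ^ k) - 1) ^ k₃ * p₃,
          uS F (p ^ k) * (xS F (p ^ k) - 1) ^ t₁
            + uS F (p ^ k) ^ 2 * (xS F (p ^ k) - 1) ^ k₄ * p₄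
            + uS F (p ^ k) ^ 3 * (xS F (p ^ k) - 1) ^ k₅ * p₅,
          uS F (p ^ k) ^ 2 * (xS F (p ^ k) - 1) ^ t₂
            + uS F (p ^ k) ^ 3 * (xS F (p ^ k) - 1) ^ k₆ * p₆,
          uS F (p ^ k) ^ 3 * (xS F (p ^ k) - 1) ^ t₃ } := by
  have := Fact.mk hp
  have := charP_of_card_eq_prime_pow hF
  have hch : ((X : F[X]) - 1) ^ p ^ k = X ^ p ^ k - 1 := by rw [sub_pow_char_pow, one_pow]
  have hG₃ := h3.generator_three_mem
  obtain ⟨k₆, p₆, hp₆, hk₆, hG₂⟩ := h2.exists_generator_two_mem hch hG₃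
  obtain ⟨k₄, k₅, p₄, p₅, hp₄, hp₅, hk₄, hk₅, hG₁⟩ := h1.exists_generator_one_mem hch hG₂ hG₃
  obtain ⟨k₁, k₂, k₃, p₁, p₂, p₃, hp₁, hp₂, hp₃, hk₁, hk₂, hk₃, hG₀⟩ :=
    h0.exists_generator_zero_mem hch hG₁ hG₂ hG₃
  refine ⟨k₁, k₂, k₃, k₄, k₅, k₆, p₁, p₂, p₃, p₄, p₅, p₆, hp₁, hp₂, hp₃, hp₄, hp₅, hp₆,
    hk₁, hk₂, hk₄, hk₃, hk₅, hk₆, ?_⟩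
  set u := uS F (p ^ k)
  set y := xS F (p ^ k) - 1
  exact eq_span_of_hasTorDeg h0 h1 h2 h3 (r₀ := y ^ k₁ * p₁ + u * y ^ k₂ * p₂ + u ^ 2 * y ^ k₃ * p₃)
    (r₁ := y ^ k₄ * p₄ + u * y ^ k₅ * p₅) (r₂ := y ^ k₆ * p₆) (by ring) (by ring) (by ring) rfl
    hG₀ hG₁ hG₂ hG₃

/-- `C` is generated by four polynomials `g₀, g₁, g₂, g₃` of the displayed shape. -/
theorem stmt_2 (p m k : ℕ) (hp : Nat.Prime p) (hm : 1 ≤ m) (hk : 1 ≤ k)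
    (F : Type) [Field F] [Fintype F] (hF : Fintype.card F = p ^ m)
    (C : Ideal (Sq F (p ^ k))) (t₀ t₁ t₂ t₃ : ℕ)
    (h0 : HasTorDeg F (p ^ k) 0 C t₀) (h1 : HasTorDeg F (p ^ k) 1 C t₁)
    (h2 : HasTorDeg F (p ^ k) 2 C t₂) (h3 : HasTorDeg F (p ^ k) 3 C t₃) :
    ∃ (k₁ k₂ k₃ k₄ k₅ k₆ : ℕ) (p₁ p₂ p₃ p₄ p₅ p₆ : Sq F (p ^ k)),
      UnitOrZeroLift F (p ^ k) p₁ ∧ UnitOrZeroLift F (p ^ k) p₂ ∧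
      UnitOrZeroLift F (p ^ k) p₃ ∧ UnitOrZeroLift F (p ^ k) p₄ ∧
      UnitOrZeroLift F (p ^ k) p₅ ∧ UnitOrZeroLift F (p ^ k) p₆ ∧
      (p₁ ≠ 0 → k₁ < t₁) ∧
      (p₂ ≠ 0 → k₂ < t₂) ∧ (p₄ ≠ 0 → k₄ < t₂) ∧
      (p₃ ≠ 0 → k₃ < t₃) ∧ (p₅ ≠ 0 → k₅ < t₃) ∧ (p₆ ≠ 0 → k₆ < t₃) ∧
      C = Ideal.span
        { (xS F (p ^ k) - 1) ^ t₀ + uS F (p ^ k) * (xS F (p ^ k) - 1) ^ k₁ * p₁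
            + uS F (p ^ k) ^ 2 * (xS F (p ^ k) - 1) ^ k₂ * p₂
            + uS F (p ^ k) ^ 3 * (xS F (p ^ k) - 1) ^ k₃ * p₃,
          uS F (p ^ k) * (xS F (p ^ k) - 1) ^ t₁
            + uS F (p ^ k) ^ 2 * (xS F (p ^ k) - 1) ^ k₄ * p₄
            + uS F (p ^ k) ^ 3 * (xS F (p ^ k) - 1) ^ k₅ * p₅,
          uS F (p ^ k) ^ 2 * (xS F (p ^ k) - 1) ^ t₂
            + uS F (p ^ k) ^ 3 * (xS F (p ^ k) - 1) ^ k₆ * p₆,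
          uS F (p ^ k) ^ 3 * (xS F (p ^ k) - 1) ^ t₃ } :=
  stmt_2_general p m k hp F hF C t₀ t₁ t₂ t₃ h0 h1 h2 h3

end
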